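/- arXiv:1503.08112 — 2 statements merged into one kernel-verified Lean document; each statement's English description precedes it below -/
import Mathlib

section
/- Let 0 < r < R and let γ be a piecewise smooth closed curve in the annulus A = A(r,R) whose winding number about 0 equals n ≠ 0. Then the hyperbolic length ℓ(γ) of γ in A satisfies ℓ(γ) ≥ 2π²|n| / log(R/r). -/
open Set Function

noncomputable section

/-- An entire function: holomorphic on all of ℂ. -/
def Entire (f : ℂ → ℂ) : Prop := Differentiable ℂ f

/-- A transcendental entire function: entire and not a polynomial. -/
def TranscendentalEntire (f : ℂ → ℂ) : Prop :=
  Entire f ∧ ∀ p : Polynomial ℂ, f ≠ fun z => Polynomial.eval z p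

/-- Two functions are permutable (commuting) if `f ∘ g = g ∘ f`. -/
def Permutable (f g : ℂ → ℂ) : Prop := f ∘ g = g ∘ f

/-- The spherical (chordal) distance on the Riemann sphere ℂ ∪ {∞},
modeled as `Option ℂ` with `Option.none` playing the role of ∞. -/
def sphDist : Option ℂ → Option ℂ → ℝ
  | Option.some z, Option.some w =>
      2 * ‖z - w‖ /
        (Real.sqrt (1 + ‖z‖ ^ 2) * Real.sqrt (1 + ‖w‖ ^ 2))
  | Option.some z, Option.none => 2 / Real.sqrt (1 + ‖z‖ ^ 2)
  | Option.none, Option.some w => 2 / Real.sqrt (1 + ‖w‖ ^ 2)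
  | Option.none, Option.none => 0

/-- The sequence of iterates `n ↦ f^[k n]` converges locally uniformly on `U`
(with respect to the spherical metric) to the limit function `φ : ℂ → ℂ ∪ {∞}`. -/
def ConvLocUnifOn (f : ℂ → ℂ) (k : ℕ → ℕ) (U : Set ℂ) (φ : ℂ → Option ℂ) : Prop :=
  ∀ K : Set ℂ, K ⊆ U → IsCompact K → ∀ ε > (0 : ℝ), ∃ N : ℕ, ∀ n ≥ N, ∀ z ∈ K,
    sphDist (Option.some (f^[k n] z)) (φ z) < ε

/-- The family of iterates of `f` is normal on `U`: every sequence of iterates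
has a subsequence converging locally uniformly on `U` with respect to the
spherical metric on the Riemann sphere. -/
def NormalOn (f : ℂ → ℂ) (U : Set ℂ) : Prop :=
  ∀ k : ℕ → ℕ, ∃ s : ℕ → ℕ, StrictMono s ∧ ∃ φ : ℂ → Option ℂ,
    ConvLocUnifOn f (k ∘ s) U φ

/-- The Fatou set of `f`: points with an open neighborhood on which the
family of iterates of `f` is normal. -/
def FatouSet (f : ℂ → ℂ) : Set ℂ :=
  {z | ∃ U : Set ℂ, IsOpen U ∧ z ∈ U ∧ NormalOn f U}

/-- The Julia set of `f`: the complement of the Fatou set. -/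
def JuliaSet (f : ℂ → ℂ) : Set ℂ := (FatouSet f)ᶜ

/-- `U` is a Fatou component of `f`: a connected component of the Fatou set. -/
def FatouComponent (f : ℂ → ℂ) (U : Set ℂ) : Prop :=
  ∃ z ∈ FatouSet f, U = connectedComponentIn (FatouSet f) z

/-- `U` is a wandering domain of `f`: a Fatou component such that the Fatou
components `U_n` containing `f^[n] '' U`, `n ≥ 0`, are pairwise distinct. -/
def WanderingDomain (f : ℂ → ℂ) (U : Set ℂ) : Prop :=
  FatouComponent f U ∧
  ∃ comp : ℕ → Set ℂ,
    (∀ n : ℕ, FatouComponent f (comp n) ∧ f^[n] '' U ⊆ comp n) ∧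
    Function.Injective comp

/-- A multiply connected wandering domain: a wandering domain that is not
simply connected. -/
def MCWanderingDomain (f : ℂ → ℂ) (U : Set ℂ) : Prop :=
  WanderingDomain f U ∧ ¬ SimplyConnectedSpace U

/-- The maximum modulus `M(r, f)` of `f` on the circle of radius `r`. -/
def maxMod (f : ℂ → ℂ) (r : ℝ) : ℝ :=
  sSup ((fun z => ‖f z‖) '' Metric.sphere (0 : ℂ) r)

/-- The fast escaping set `A(f)`. -/
def fastEscaping (f : ℂ → ℂ) : Set ℂ :=
  {z | ∃ R > (0 : ℝ), (∀ r ≥ R, r < maxMod f r) ∧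
    ∃ L : ℕ, ∀ n : ℕ, L < n → maxMod (f^[n - L]) R < ‖f^[n] z‖}

/-- The open annulus `A(r, R) = {z : r < |z| < R}`. -/
def ann (r R : ℝ) : Set ℂ := {z : ℂ | r < ‖z‖ ∧ ‖z‖ < R}

/-- An exceptional point of `f`: a point with finite backward orbit. -/
def ExceptionalPoint (f : ℂ → ℂ) (z : ℂ) : Prop :=
  Set.Finite {w : ℂ | ∃ n : ℕ, f^[n] w = z}

/-- `F*(f)`: the union of those Fatou components of `f` that are *not*
simply connected wandering domains contained in the fast escaping set. -/
def FatouStar (f : ℂ → ℂ) : Set ℂ :=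
  ⋃₀ {U : Set ℂ | FatouComponent f U ∧
    ¬ (WanderingDomain f U ∧ SimplyConnectedSpace U ∧ U ⊆ fastEscaping f)}


/-! Since `0 < sin ≤ 1` on the annulus, `λ_A(z) ≥ π / (log(R/r) |z|)`, hence
`ℓ(γ) ≥ π / log(R/r) · ∫ |γ'/γ| ≥ π / log(R/r) · |∫ γ'/γ| = π / log(R/r) · 2π|n|`.
The hyperbolic integrand must also be shown integrable (otherwise its integral is `0`): on the
compact curve it is a continuous multiple of `|γ'/γ|`, which is integrable because `n ≠ 0`. -/

open MeasureTheory

def annulusHypDensity (r R : ℝ) (z : ℂ) : ℝ :=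
  Real.pi / Real.log (R / r) *
    (‖z‖ * Real.sin (Real.pi * Real.log (‖z‖ / r) / Real.log (R / r)))⁻¹

section AnnulusDensity

variable {r R : ℝ} {z : ℂ}

lemma log_div_pos_of_mem_ann (hr : 0 < r) (hz : z ∈ ann r R) : 0 < Real.log (R / r) :=
  Real.log_pos <| (one_lt_div hr).2 (hz.1.trans hz.2)

lemma sin_pos_of_mem_ann (hr : 0 < r) (hz : z ∈ ann r R) :
    0 < Real.sin (Real.pi * Real.log (‖z‖ / r) / Real.log (R / r)) := by
  have hL := log_div_pos_of_mem_ann hr hz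
  have hlog_pos : 0 < Real.log (‖z‖ / r) := Real.log_pos <| (one_lt_div hr).2 hz.1
  have hlog_lt : Real.log (‖z‖ / r) < Real.log (R / r) :=
    Real.log_lt_log (div_pos (hr.trans hz.1) hr) (div_lt_div_of_pos_right hz.2 hr)
  apply Real.sin_pos_of_pos_of_lt_pi (by positivity)
  rw [div_lt_iff₀ hL]
  exact mul_lt_mul_of_pos_left hlog_lt Real.pi_pos

lemma div_mul_norm_inv_le_annulusHypDensity (hr : 0 < r) (hz : z ∈ ann r R) :
    Real.pi / Real.log (R / r) * ‖z‖⁻¹ ≤ annulusHypDensity r R z := by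
  have hL := log_div_pos_of_mem_ann hr hz
  have hs := sin_pos_of_mem_ann hr hz
  have hz0 : 0 < ‖z‖ := hr.trans hz.1
  unfold annulusHypDensity
  gcongr
  exact mul_le_of_le_one_right hz0.le (Real.sin_le_one _)

lemma continuousOn_annulusHypDensity (hr : 0 < r) :
    ContinuousOn (annulusHypDensity r R) (ann r R) := by
  refine continuousOn_const.mul (ContinuousOn.inv₀ ?_ fun z hz =>
    (mul_pos (hr.trans hz.1) (sin_pos_of_mem_ann hr hz)).ne')
  refine continuous_norm.continuousOn.mul (Real.continuous_sin.comp_continuousOn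
    ((continuousOn_const.mul (ContinuousOn.log ?_ ?_)).div_const _))
  · exact continuous_norm.continuousOn.div_const r
  · exact fun z hz => (div_pos (hr.trans hz.1) hr).ne'

end AnnulusDensity

section LogDerivative

variable {r R a b : ℝ} {γ : ℝ → ℂ}

lemma intervalIntegrable_annulusHypDensity_mul_norm_deriv (hr : 0 < r)
    (hcont : ContinuousOn γ (uIcc a b)) (hmem : MapsTo γ (uIcc a b) (ann r R))
    (hint : IntervalIntegrable (fun t => deriv γ t / γ t) volume a b) :
    IntervalIntegrable (fun t => annulusHypDensity r R (γ t) * ‖deriv γ t‖) volume a b := by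
  have hcont' : ContinuousOn (fun t => ‖γ t‖ * annulusHypDensity r R (γ t)) (uIcc a b) :=
    (continuous_norm.comp_continuousOn hcont).mul
      ((continuousOn_annulusHypDensity hr).comp hcont hmem)
  refine (hint.norm.mul_continuousOn hcont').congr fun t ht => ?_
  have hγ : ‖γ t‖ ≠ 0 := (hr.trans (hmem (uIoc_subset_uIcc ht)).1).ne'
  simp only [norm_div]
  field_simp

lemma mul_integral_norm_logDeriv_le_integral_annulusHypDensity (hr : 0 < r) (hab : a ≤ b)
    (hcont : ContinuousOn γ (Icc a b)) (hmem : MapsTo γ (Icc a b) (ann r R))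
    (hint : IntervalIntegrable (fun t => deriv γ t / γ t) volume a b) :
    Real.pi / Real.log (R / r) * ∫ t in a..b, ‖deriv γ t / γ t‖ ≤
      ∫ t in a..b, annulusHypDensity r R (γ t) * ‖deriv γ t‖ := by
  rw [← uIcc_of_le hab] at hcont hmem
  rw [← intervalIntegral.integral_const_mul]
  refine intervalIntegral.integral_mono_on hab (hint.norm.const_mul _)
    (intervalIntegrable_annulusHypDensity_mul_norm_deriv hr hcont hmem hint) fun t ht => ?_
  rw [← uIcc_of_le hab] at ht
  calc Real.pi / Real.log (R / r) * ‖deriv γ t / γ t‖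
      = Real.pi / Real.log (R / r) * ‖γ t‖⁻¹ * ‖deriv γ t‖ := by rw [norm_div]; ring
    _ ≤ annulusHypDensity r R (γ t) * ‖deriv γ t‖ := by
      gcongr
      exact div_mul_norm_inv_le_annulusHypDensity hr (hmem ht)

end LogDerivative

lemma intervalIntegrable_of_inv_two_pi_I_mul_integral_eq {f : ℝ → ℂ} {a b : ℝ} {n : ℤ}
    (hn : n ≠ 0) (h : (2 * Real.pi * Complex.I)⁻¹ * (∫ t in a..b, f t) = n) :
    IntervalIntegrable f volume a b := by
  by_contra hf
  rw [intervalIntegral.integral_undef hf, mul_zero] at h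
  exact hn (by exact_mod_cast h.symm)

lemma norm_integral_eq_of_inv_two_pi_I_mul_integral_eq {f : ℝ → ℂ} {a b : ℝ} {n : ℤ}
    (h : (2 * Real.pi * Complex.I)⁻¹ * (∫ t in a..b, f t) = n) :
    ‖∫ t in a..b, f t‖ = 2 * Real.pi * |(n : ℝ)| := by
  rw [inv_mul_eq_iff_eq_mul₀ (by simp [Real.pi_ne_zero])] at h
  rw [h, norm_mul, norm_mul, norm_mul, Complex.norm_I, Complex.norm_real, Complex.norm_two,
    Complex.norm_intCast, Real.norm_of_nonneg Real.pi_pos.le, mul_one]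

theorem hyperbolic_length_closed_curve_in_annulus_general
    (r R : ℝ) (hr : 0 < r) (hrR : r < R)
    (γ : ℝ → ℂ) (n : ℤ) (hn : n ≠ 0)
    (hcont : ContinuousOn γ (Set.Icc 0 1))
    (hmem : ∀ t ∈ Set.Icc (0 : ℝ) 1, γ t ∈ ann r R)
    (hwind : (2 * Real.pi * Complex.I)⁻¹ *
      (∫ t in (0 : ℝ)..1, deriv γ t / γ t) = (n : ℂ)) :
    2 * Real.pi ^ 2 * |(n : ℝ)| / Real.log (R / r) ≤
      ∫ t in (0 : ℝ)..1,
        (Real.pi / Real.log (R / r)) *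
          (‖γ t‖ *
            Real.sin (Real.pi * Real.log (‖γ t‖ / r) /
              Real.log (R / r)))⁻¹ *
          ‖deriv γ t‖ := by
  have hL : 0 < Real.log (R / r) := Real.log_pos <| (one_lt_div hr).2 hrR
  calc 2 * Real.pi ^ 2 * |(n : ℝ)| / Real.log (R / r)
      = Real.pi / Real.log (R / r) * ‖∫ t in (0 : ℝ)..1, deriv γ t / γ t‖ := by
        rw [norm_integral_eq_of_inv_two_pi_I_mul_integral_eq hwind]; ring
    _ ≤ Real.pi / Real.log (R / r) * ∫ t in (0 : ℝ)..1, ‖deriv γ t / γ t‖ := by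
        gcongr
        exact intervalIntegral.norm_integral_le_integral_norm zero_le_one
    _ ≤ ∫ t in (0 : ℝ)..1, annulusHypDensity r R (γ t) * ‖deriv γ t‖ :=
        mul_integral_norm_logDeriv_le_integral_annulusHypDensity hr zero_le_one hcont hmem
          (intervalIntegrable_of_inv_two_pi_I_mul_integral_eq hn hwind)

/-- A piecewise smooth closed curve in the annulus `A(r, R)` with winding number
`n ≠ 0` about `0` has hyperbolic length at least `2π²|n| / log(R/r)`. -/
theorem hyperbolic_length_closed_curve_in_annulus
    (r R : ℝ) (hr : 0 < r) (hrR : r < R)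
    (γ : ℝ → ℂ) (n : ℤ) (hn : n ≠ 0)
    (hcont : ContinuousOn γ (Set.Icc 0 1))
    (hpiecewise : ∃ s : Finset ℝ, ∀ t ∈ Set.Icc (0 : ℝ) 1 \ (s : Set ℝ),
      DifferentiableAt ℝ γ t)
    (hclosed : γ 0 = γ 1)
    (hmem : ∀ t ∈ Set.Icc (0 : ℝ) 1, γ t ∈ ann r R)
    (hwind : (2 * Real.pi * Complex.I)⁻¹ *
      (∫ t in (0 : ℝ)..1, deriv γ t / γ t) = (n : ℂ)) :
    2 * Real.pi ^ 2 * |(n : ℝ)| / Real.log (R / r) ≤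
      ∫ t in (0 : ℝ)..1,
        (Real.pi / Real.log (R / r)) *
          (‖γ t‖ *
            Real.sin (Real.pi * Real.log (‖γ t‖ / r) /
              Real.log (R / r)))⁻¹ *
          ‖deriv γ t‖ :=
  hyperbolic_length_closed_curve_in_annulus_general r R hr hrR γ n hn hcont hmem hwind
end
end

section
/- Let f and g be permutable transcendental entire functions. Then g(J(f)) ⊆ J(f), i.e., the image of the Julia set of f under g is contained in the Julia set of f. -/
open Set Function

noncomputable section

/-! Suppose `g z` lies in the Fatou set of `f` and let `H n = f^[k n]`. After passing to a
subsequence, `g ∘ H n = f^[k n] ∘ g` converges locally uniformly near `z` in the spherical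
metric. Near a point `w₀` the limit stays away from the compact set `g(D)` for some closed disk
`D = closedBall b ρ`, since `g` is not constant, so for large `n` the maps `H n` omit `D` near
`w₀`. Then `1 / (H n - b)` is bounded by `1 / ρ`, hence uniformly Lipschitz by the Schwarz
lemma; as `v ↦ b + 1 / v` is Lipschitz from `ℂ` to the Riemann sphere, the `H n` are spherically
equicontinuous. Arzelà–Ascoli gives a subsequence of `H n` converging locally uniformly near `z`,
so `z` lies in the Fatou set too. -/

open Filter Metric Topology Uniformity

lemma equicontinuousAt_of_tail {X α : Type*} [TopologicalSpace X] [UniformSpace α]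
    {F : ℕ → X → α} {x₀ : X} (N : ℕ) (hc : ∀ n, ContinuousAt (F n) x₀)
    (h : EquicontinuousAt (fun n ↦ F (n + N)) x₀) : EquicontinuousAt F x₀ := by
  intro V hV
  filter_upwards [h V hV, equicontinuousAt_finite.2 (fun i : Fin N ↦ hc i) V hV]
    with x htail hhead n
  rcases lt_or_ge n N with hn | hn
  · exact hhead ⟨n, hn⟩
  · simpa [Nat.sub_add_cancel hn] using htail (n - N)

lemma IsOpen.exists_monotone_isCompact_cofinal {X : Type*} [TopologicalSpace X]
    [LocallyCompactSpace X] [SecondCountableTopology X] {U : Set X} (hU : IsOpen U) :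
    ∃ t : ℕ → Set X, (∀ n, IsCompact (t n) ∧ t n ⊆ U) ∧ Monotone t ∧
      ∀ K ⊆ U, IsCompact K → ∃ n, K ⊆ t n := by
  have := hU.locallyCompactSpace
  let E := CompactExhaustion.choice U
  refine ⟨fun n ↦ (↑) '' E n, fun n ↦ ⟨(E.isCompact n).image continuous_subtype_val,
    image_subset_range _ _ |>.trans Subtype.range_coe.subset⟩,
    fun m n h ↦ image_mono (E.subset h), fun K hKU hK ↦ ?_⟩
  obtain ⟨n, hn⟩ := E.exists_superset_of_isCompact (s := (↑) ⁻¹' K)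
    (Subtype.isCompact_iff.2 (by rwa [Subtype.image_preimage_coe, inter_eq_right.2 hKU]))
  exact ⟨n, fun x hx ↦ ⟨⟨x, hKU hx⟩, hn hx, rfl⟩⟩

theorem exists_subseq_tendstoUniformlyOn_of_equicontinuousAt {X α : Type*} [TopologicalSpace X]
    [LocallyCompactSpace X] [SecondCountableTopology X] [UniformSpace α] [T2Space α]
    [IsCountablyGenerated (𝓤 α)] {U : Set X} (hU : IsOpen U) {Q : Set α} (hQ : IsCompact Q)
    (F : ℕ → X → α) (hFQ : ∀ n, ∀ x ∈ U, F n x ∈ Q) (hF : ∀ x ∈ U, EquicontinuousAt F x) :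
    ∃ s : ℕ → ℕ, StrictMono s ∧ ∃ G : X → α, (∀ x ∈ U, G x ∈ Q) ∧
      ∀ K ⊆ U, IsCompact K → TendstoUniformlyOn (fun n ↦ F (s n)) G atTop K := by
  set 𝔖 : Set (Set X) := {K | IsCompact K ∧ K ⊆ U}
  obtain ⟨t, ht, htmono, htcof⟩ := hU.exists_monotone_isCompact_cofinal
  have := UniformOnFun.isCountablyGenerated_uniformity (β := α) 𝔖 ht htmono
    fun K hK ↦ htcof K hK.2 hK.1
  have hcpt : IsCompact (closure (range fun n ↦ UniformOnFun.ofFun 𝔖 (F n))) :=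
    ArzelaAscoli.isCompact_closure_of_isClosedEmbedding (F := UniformOnFun.toFun 𝔖)
      (fun K hK ↦ hK.1) IsClosedEmbedding.id (fun K hK x hx ↦ ?_) fun K hK x hx ↦ ⟨Q, hQ, ?_⟩
  · obtain ⟨G, -, s, hs, hlim⟩ := hcpt.tendsto_subseq fun n ↦ subset_closure (mem_range_self n)
    have hunif : ∀ K ⊆ U, IsCompact K →
        TendstoUniformlyOn (fun n ↦ F (s n)) (UniformOnFun.toFun 𝔖 G) atTop K :=
      fun K hKU hK ↦ UniformOnFun.tendsto_iff_tendstoUniformlyOn.1 hlim K ⟨hK, hKU⟩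
    refine ⟨s, hs, UniformOnFun.toFun 𝔖 G, fun x hx ↦ ?_, hunif⟩
    exact hQ.isClosed.mem_of_tendsto
      ((hunif {x} (singleton_subset_iff.2 hx) isCompact_singleton).tendsto_at rfl)
      (Eventually.of_forall fun n ↦ hFQ (s n) x hx)
  · exact (equicontinuousAt_iff_range.1 (hF x (hK.2 hx))).equicontinuousWithinAt K
  · rintro _ ⟨n, rfl⟩
    exact hFQ n x (hK.2 hx)

/-- Inverse stereographic projection onto the unit sphere of `ℝ³`; it realises the chordal
metric `sphDist` as a Euclidean distance. -/
def toSphere : Option ℂ → EuclideanSpace ℝ (Fin 3)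
  | some z => !₂[2 * z.re / (1 + ‖z‖ ^ 2), 2 * z.im / (1 + ‖z‖ ^ 2),
      (‖z‖ ^ 2 - 1) / (1 + ‖z‖ ^ 2)]
  | none => !₂[0, 0, 1]

lemma sphDist_nonneg (x y : Option ℂ) : 0 ≤ sphDist x y := by
  rcases x with _ | z <;> rcases y with _ | w <;> simp only [sphDist] <;> positivity

lemma sphDist_eq_dist (x y : Option ℂ) : sphDist x y = dist (toSphere x) (toSphere y) := by
  have h (z : ℂ) : 0 < 1 + z.re * z.re + z.im * z.im := by
    nlinarith [mul_self_nonneg z.re, mul_self_nonneg z.im]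
  rw [EuclideanSpace.dist_eq, eq_comm,
    Real.sqrt_eq_iff_eq_sq (by positivity) (sphDist_nonneg x y), Fin.sum_univ_three]
  rcases x with _ | z <;> rcases y with _ | w <;>
    simp only [sphDist, toSphere, Real.dist_eq, sq_abs, div_pow, mul_pow, PiLp.toLp_apply,
      Matrix.cons_val_zero, Matrix.cons_val_one, Matrix.cons_val_two, Matrix.head_cons,
      Matrix.tail_cons, Complex.sq_norm, Complex.normSq_apply, Complex.sub_re, Complex.sub_im,
      ← add_assoc]
  · norm_num
  · rw [Real.sq_sqrt (h w).le]; have := h w; field_simp; ring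
  · rw [Real.sq_sqrt (h z).le]; have := h z; field_simp; ring
  · rw [Real.sq_sqrt (h z).le, Real.sq_sqrt (h w).le]; have := h z; have := h w
    field_simp; ring

lemma norm_toSphere (x : Option ℂ) : ‖toSphere x‖ = 1 := by
  rw [EuclideanSpace.norm_eq, Real.sqrt_eq_one, Fin.sum_univ_three]
  rcases x with _ | z
  · simp [toSphere]
  · simp only [toSphere, Real.norm_eq_abs, sq_abs, div_pow, mul_pow, PiLp.toLp_apply,
      Matrix.cons_val_zero, Matrix.cons_val_one, Matrix.cons_val_two, Matrix.head_cons,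
      Matrix.tail_cons, Complex.sq_norm, Complex.normSq_apply, ← add_assoc]
    have : 0 < 1 + z.re * z.re + z.im * z.im := by
      nlinarith [mul_self_nonneg z.re, mul_self_nonneg z.im]
    field_simp; ring

lemma range_toSphere : range toSphere = sphere 0 1 := by
  refine Subset.antisymm
    (range_subset_iff.2 fun x ↦ mem_sphere_zero_iff_norm.2 (norm_toSphere x)) fun p hp ↦ ?_
  have hp : p 0 ^ 2 + p 1 ^ 2 + p 2 ^ 2 = 1 := by
    rw [mem_sphere_zero_iff_norm, EuclideanSpace.norm_eq, Real.sqrt_eq_one,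
      Fin.sum_univ_three] at hp
    simpa only [Real.norm_eq_abs, sq_abs] using hp
  by_cases h2 : p 2 = 1
  · have h0 : p 0 = 0 := by nlinarith
    have h1 : p 1 = 0 := by nlinarith
    refine ⟨none, ?_⟩
    ext i; fin_cases i <;> simp [toSphere, h0, h1, h2]
  · have h2' : 1 - p 2 ≠ 0 := sub_ne_zero.2 (Ne.symm h2)
    set z : ℂ := ⟨p 0 / (1 - p 2), p 1 / (1 - p 2)⟩
    have hz : ‖z‖ ^ 2 = 2 / (1 - p 2) - 1 := by
      rw [Complex.sq_norm, Complex.normSq_apply, eq_sub_iff_add_eq]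
      dsimp only [z]; field_simp; nlinarith
    refine ⟨some z, ?_⟩
    ext i; fin_cases i <;> simp only [toSphere, hz, z, add_sub_cancel, Fin.zero_eta, Fin.mk_one,
      Fin.reduceFinMk, PiLp.toLp_apply, Matrix.cons_val] <;> field_simp
    ring

lemma toSphere_injective : Injective toSphere := by
  intro x y h
  have h0 : sphDist x y = 0 := by rw [sphDist_eq_dist, h, dist_self]
  rcases x with _ | z <;> rcases y with _ | w
  · rfl
  all_goals simp only [sphDist] at h0
  · exact absurd h0 (by positivity)
  · exact absurd h0 (by positivity)
  · have hpos (u : ℂ) : ¬ 1 + ‖u‖ ^ 2 ≤ 0 := not_le.2 (by positivity)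
    simpa [sub_eq_zero, Real.sqrt_eq_zero', hpos] using h0

lemma dist_toSphere_some_le (z w : ℂ) :
    dist (toSphere (some z)) (toSphere (some w)) ≤ 2 * dist z w := by
  rw [← sphDist_eq_dist, sphDist, dist_eq_norm]
  refine div_le_self (by positivity) (one_le_mul_of_one_le_of_one_le ?_ ?_) <;>
    exact Real.one_le_sqrt.2 (le_add_of_nonneg_right (by positivity))

lemma continuous_toSphere_some : Continuous fun z : ℂ ↦ toSphere (some z) :=
  (LipschitzWith.of_dist_le_mul (K := 2) fun z w ↦ by
    simpa using dist_toSphere_some_le z w).continuous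

lemma one_le_mul_norm_sq_mul_one_add_norm_add_inv_sq (b v : ℂ) (hv : v ≠ 0) :
    1 ≤ (1 + ‖b‖ ^ 2) * (‖v‖ ^ 2 * (1 + ‖b + v⁻¹‖ ^ 2)) := by
  have hmul : ‖v‖ * ‖b + v⁻¹‖ = ‖b * v + 1‖ := by
    rw [← norm_mul, mul_add, mul_inv_cancel₀ hv, mul_comm]
  have htri : 1 ≤ ‖b‖ * ‖v‖ + ‖b * v + 1‖ := by
    simpa [norm_mul, add_comm] using norm_sub_le (b * v + 1) (b * v)
  have hsq : ‖v‖ ^ 2 * (1 + ‖b + v⁻¹‖ ^ 2) = ‖v‖ ^ 2 + ‖b * v + 1‖ ^ 2 := by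
    rw [← hmul]; ring
  rw [hsq]
  -- Cauchy–Schwarz for the vectors `(‖b‖, 1)` and `(‖v‖, ‖b * v + 1‖)`
  nlinarith [sq_nonneg (‖b‖ * ‖b * v + 1‖ - ‖v‖), mul_self_le_mul_self zero_le_one htri]

lemma dist_toSphere_add_inv_le (b : ℂ) {v w : ℂ} (hv : v ≠ 0) (hw : w ≠ 0) :
    dist (toSphere (some (b + v⁻¹))) (toSphere (some (b + w⁻¹))) ≤
      2 * (1 + ‖b‖ ^ 2) * dist v w := by
  rw [← sphDist_eq_dist, sphDist, add_sub_add_left_eq_sub, inv_sub_inv hv hw, norm_div,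
    norm_mul, norm_sub_rev, dist_eq_norm]
  have key (u : ℂ) (hu : u ≠ 0) : 1 ≤ √(1 + ‖b‖ ^ 2) * (‖u‖ * √(1 + ‖b + u⁻¹‖ ^ 2)) := by
    rw [← Real.sqrt_sq (norm_nonneg u), ← Real.sqrt_mul (sq_nonneg _),
      ← Real.sqrt_mul (by positivity)]
    exact Real.one_le_sqrt.2 (one_le_mul_norm_sq_mul_one_add_norm_add_inv_sq b u hu)
  have hc : √(1 + ‖b‖ ^ 2) * √(1 + ‖b‖ ^ 2) = 1 + ‖b‖ ^ 2 := Real.mul_self_sqrt (by positivity)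
  have hprod : 1 ≤ (1 + ‖b‖ ^ 2) *
      ((‖v‖ * ‖w‖) * (√(1 + ‖b + v⁻¹‖ ^ 2) * √(1 + ‖b + w⁻¹‖ ^ 2))) :=
    calc 1 ≤ _ := one_le_mul_of_one_le_of_one_le (key v hv) (key w hw)
      _ = _ := by rw [mul_mul_mul_comm, hc]; ring
  have := norm_pos_iff.2 hv
  have := norm_pos_iff.2 hw
  rw [mul_div_assoc', div_div, div_le_iff₀ (by positivity)]
  nlinarith [mul_le_mul_of_nonneg_left hprod (norm_nonneg (v - w))]

lemma convLocUnifOn_iff {f : ℂ → ℂ} {k : ℕ → ℕ} {U : Set ℂ} {φ : ℂ → Option ℂ} :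
    ConvLocUnifOn f k U φ ↔ ∀ K ⊆ U, IsCompact K →
      TendstoUniformlyOn (fun n z ↦ toSphere (some (f^[k n] z))) (toSphere ∘ φ) atTop K := by
  simp only [ConvLocUnifOn, Metric.tendstoUniformlyOn_iff, eventually_atTop, sphDist_eq_dist,
    dist_comm (toSphere (φ _)), comp_apply]

lemma dist_toSphere_le_of_mapsTo_compl_closedBall {h : ℂ → ℂ} {c b z : ℂ} {δ ρ : ℝ}
    (hh : DifferentiableOn ℂ h (ball c δ)) (hρ : 0 < ρ)
    (hmaps : MapsTo h (ball c δ) (closedBall b ρ)ᶜ) (hz : z ∈ ball c δ) :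
    dist (toSphere (some (h z))) (toSphere (some (h c))) ≤
      2 * (1 + ‖b‖ ^ 2) * (2 / ρ / δ) * dist z c := by
  have hc : c ∈ ball c δ := mem_ball_self (pos_of_mem_ball hz)
  have hfar (w) (hw : w ∈ ball c δ) : ρ < ‖h w - b‖ := by
    simpa [dist_eq_norm] using hmaps hw
  have hne (w) (hw : w ∈ ball c δ) : h w - b ≠ 0 := norm_pos_iff.1 (hρ.trans (hfar w hw))
  set v : ℂ → ℂ := fun w ↦ (h w - b)⁻¹
  have hv (w : ℂ) : h w = b + (v w)⁻¹ := by simp [v]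
  have hvle (w) (hw : w ∈ ball c δ) : ‖v w‖ ≤ ρ⁻¹ := by
    rw [norm_inv]; exact inv_anti₀ hρ (hfar w hw).le
  have hschwarz : dist (v z) (v c) ≤ 2 / ρ / δ * dist z c := by
    refine Complex.dist_le_div_mul_dist_of_mapsTo_ball
      ((hh.sub_const b).inv hne) (fun w hw ↦ ?_) hz
    rw [mem_closedBall, dist_eq_norm]
    calc ‖v w - v c‖ ≤ ‖v w‖ + ‖v c‖ := norm_sub_le _ _
      _ ≤ ρ⁻¹ + ρ⁻¹ := add_le_add (hvle w hw) (hvle c hc)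
      _ = 2 / ρ := by ring
  rw [hv z, hv c]
  calc _ ≤ 2 * (1 + ‖b‖ ^ 2) * dist (v z) (v c) :=
        dist_toSphere_add_inv_le b (inv_ne_zero (hne z hz)) (inv_ne_zero (hne c hc))
    _ ≤ _ := by rw [mul_assoc _ (2 / ρ / δ)]; gcongr

lemma equicontinuousAt_toSphere_of_mapsTo_compl_closedBall {H : ℕ → ℂ → ℂ}
    (hH : ∀ n, Differentiable ℂ (H n)) {w₀ b : ℂ} {δ ρ : ℝ} (hδ : 0 < δ) (hρ : 0 < ρ) {N : ℕ}
    (hmaps : ∀ n ≥ N, MapsTo (H n) (ball w₀ δ) (closedBall b ρ)ᶜ) :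
    EquicontinuousAt (fun n z ↦ toSphere (some (H n z))) w₀ := by
  refine equicontinuousAt_of_tail N
    (fun n ↦ (continuous_toSphere_some.comp (hH n).continuous).continuousAt) ?_
  refine Metric.equicontinuousAt_of_continuity_modulus
    (fun z ↦ 2 * (1 + ‖b‖ ^ 2) * (2 / ρ / δ) * dist z w₀) ?_ _ ?_
  · simpa using (tendsto_iff_dist_tendsto_zero.1 (tendsto_id (x := 𝓝 w₀))).const_mul
      (2 * (1 + ‖b‖ ^ 2) * (2 / ρ / δ))
  · filter_upwards [ball_mem_nhds w₀ hδ] with z hz n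
    rw [dist_comm]
    exact dist_toSphere_le_of_mapsTo_compl_closedBall (hH _).differentiableOn hρ
      (hmaps _ (Nat.le_add_left N n)) hz

lemma exists_closedBall_forall_some_ne {g : ℂ → ℂ} (hg : Continuous g)
    (hnc : ∀ c, ∃ z, g z ≠ c) (y : Option ℂ) :
    ∃ b, ∃ ρ > 0, ∀ ξ ∈ closedBall b ρ, some (g ξ) ≠ y := by
  rcases y with _ | a
  · exact ⟨0, 1, one_pos, fun _ _ ↦ Option.some_ne_none _⟩
  · obtain ⟨b, hb⟩ := hnc a
    obtain ⟨ρ, hρ, hball⟩ := nhds_basis_closedBall.mem_iff.1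
      ((isOpen_ne_fun hg continuous_const).mem_nhds hb)
    exact ⟨b, ρ, hρ, fun ξ hξ ↦ Option.some_injective _ |>.ne (hball hξ)⟩

lemma exists_mapsTo_compl_closedBall {g : ℂ → ℂ} (hg : Continuous g) (hnc : ∀ c, ∃ z, g z ≠ c)
    {H : ℕ → ℂ → ℂ} (hH : ∀ n, Continuous (H n)) {ψ : ℂ → Option ℂ} {s : Set ℂ} {w₀ : ℂ}
    (hs : s ∈ 𝓝 w₀)
    (hconv : TendstoUniformlyOn (fun n w ↦ toSphere (some (g (H n w)))) (toSphere ∘ ψ) atTop s) :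
    ∃ b, ∃ ρ > 0, ∃ δ > 0, ∃ N, ∀ n ≥ N, MapsTo (H n) (ball w₀ δ) (closedBall b ρ)ᶜ := by
  obtain ⟨b, ρ, hρ, hne⟩ := exists_closedBall_forall_some_ne hg hnc (ψ w₀)
  have hcont : Continuous fun ξ ↦ toSphere (some (g ξ)) := continuous_toSphere_some.comp hg
  have hψA : toSphere (ψ w₀) ∉ (fun ξ ↦ toSphere (some (g ξ))) '' closedBall b ρ := by
    rintro ⟨ξ, hξ, heq⟩
    exact hne ξ hξ (toSphere_injective heq)
  obtain ⟨ε, hε, hεA⟩ := Metric.isOpen_iff.1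
    ((isCompact_closedBall b ρ).image hcont).isClosed.isOpen_compl _ hψA
  have hψ : ContinuousAt (toSphere ∘ ψ) w₀ :=
    (hconv.continuousOn (Frequently.of_forall fun n ↦ (hcont.comp (hH n)).continuousOn)
      ).continuousAt hs
  obtain ⟨δ, hδ, hδs⟩ := Metric.mem_nhds_iff.1
    (inter_mem hs (hψ (ball_mem_nhds _ (half_pos hε))))
  obtain ⟨N, hN⟩ := eventually_atTop.1 (Metric.tendstoUniformlyOn_iff.1 hconv _ (half_pos hε))
  refine ⟨b, ρ, hρ, δ, hδ, N, fun n hn w hw hwD ↦ hεA ?_ ⟨H n w, hwD, rfl⟩⟩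
  have h₁ : dist (toSphere (ψ w)) (toSphere (ψ w₀)) < ε / 2 := (hδs hw).2
  have h₂ : dist (toSphere (ψ w)) (toSphere (some (g (H n w)))) < ε / 2 :=
    hN n hn w (hδs hw).1
  rw [mem_ball]
  linarith [dist_triangle_left (toSphere (some (g (H n w)))) (toSphere (ψ w₀)) (toSphere (ψ w))]

theorem NormalOn.preimage {f g : ℂ → ℂ} {V : Set ℂ} (hV : IsOpen V) (hn : NormalOn f V)
    (hf : Differentiable ℂ f) (hg : Continuous g) (hnc : ∀ c, ∃ z, g z ≠ c)
    (hfg : Permutable f g) : NormalOn f (g ⁻¹' V) := by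
  intro k
  obtain ⟨s₀, hs₀, φ₀, hφ₀⟩ := hn k
  set H : ℕ → ℂ → ℂ := fun n ↦ f^[k (s₀ n)]
  have hU : IsOpen (g ⁻¹' V) := hV.preimage hg
  have hcomm (n : ℕ) (w : ℂ) : f^[n] (g w) = g (f^[n] w) :=
    (Commute.iterate_left (fun x ↦ congrFun hfg x) n).eq w
  have hconv (K) (hK : K ⊆ g ⁻¹' V) (hKc : IsCompact K) :
      TendstoUniformlyOn (fun n w ↦ toSphere (some (g (H n w)))) (toSphere ∘ φ₀ ∘ g) atTop K := by
    have := ((convLocUnifOn_iff.1 hφ₀) _ (image_subset_iff.2 hK) (hKc.image hg)).comp g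
    simpa [comp_def, hcomm] using this.mono (subset_preimage_image g K)
  have hequi (w₀) (hw₀ : w₀ ∈ g ⁻¹' V) :
      EquicontinuousAt (fun n w ↦ toSphere (some (H n w))) w₀ := by
    obtain ⟨t, ht, htU⟩ := nhds_basis_closedBall.mem_iff.1 (hU.mem_nhds hw₀)
    obtain ⟨b, ρ, hρ, δ, hδ, N, hN⟩ := exists_mapsTo_compl_closedBall hg hnc
      (fun n ↦ (hf.iterate _).continuous) (closedBall_mem_nhds w₀ ht)
      (hconv _ htU (isCompact_closedBall w₀ t))
    exact equicontinuousAt_toSphere_of_mapsTo_compl_closedBall (fun n ↦ hf.iterate _) hδ hρ hN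
  obtain ⟨s, hs, G, hGsphere, hG⟩ := exists_subseq_tendstoUniformlyOn_of_equicontinuousAt hU
    (isCompact_sphere 0 1) _ (fun n w _ ↦ range_toSphere ▸ mem_range_self _) hequi
  choose! φ hφ using fun w hw ↦ (range_toSphere ▸ hGsphere w hw : G w ∈ range toSphere)
  exact ⟨s₀ ∘ s, hs₀.comp hs, φ, convLocUnifOn_iff.2 fun K hK hKc ↦
    (hG K hK hKc).congr_right fun w hw ↦ (hφ w (hK hw)).symm⟩

lemma TranscendentalEntire.exists_ne {g : ℂ → ℂ} (hg : TranscendentalEntire g) (c : ℂ) :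
    ∃ z, g z ≠ c := by
  by_contra! h
  exact hg.2 (Polynomial.C c) (funext fun z ↦ by simp [h z])

/-- For permutable transcendental entire functions `f` and `g`,
`g(J(f)) ⊆ J(f)`. -/
theorem image_julia_subset
    (f g : ℂ → ℂ) (hf : TranscendentalEntire f) (hg : TranscendentalEntire g)
    (hfg : Permutable f g) :
    g '' JuliaSet f ⊆ JuliaSet f := by
  rintro _ ⟨z, hz, rfl⟩ ⟨V, hV, hzV, hVn⟩
  exact hz ⟨g ⁻¹' V, hV.preimage hg.1.continuous, hzV,
    hVn.preimage hV hf.1 hg.1.continuous hg.exists_ne hfg⟩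
end
end
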